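/- Under the su(N) generator hypotheses, the Dirac matrices in the Dirac representation, and the Grassmann setup, the exchange-type sixth-order Fierz identity holds: Σ_{i₁,i₂,i₃ ∈ Fin N} B 1 i₁ i₁ * B 1 i₂ i₃ * B 1 i₃ i₂ = −(1/4) • ⟪1⟫ * ⟪1⟫ * ⟪1⟫ − (1/4) • ⟪1⟫ * ⟪γ5⟫ * ⟪γ5⟫ + (1/4) • Σ_{μ} ε μ • ⟪1⟫ * ⟪γ5 * γ μ⟫ * ⟪γ5 * γ μ⟫ − (1/4) • Σ_{μ} ε μ • ⟪1⟫ * ⟪γ μ⟫ * ⟪γ μ⟫ − (1/8) • Σ_{μ,ν} ε μ · ε ν • ⟪1⟫ * ⟪σ μ ν⟫ * ⟪σ μ ν⟫, where μ, ν range over Fin 4. -/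

import Mathlib

noncomputable section

open Complex Matrix

/-- The Dirac γ-matrices in the Dirac representation. -/
def γm : Fin 4 → Matrix (Fin 4) (Fin 4) ℂ :=
  ![!![1,0,0,0; 0,1,0,0; 0,0,-1,0; 0,0,0,-1],
    !![0,0,0,1; 0,0,1,0; 0,-1,0,0; -1,0,0,0],
    !![0,0,0,-I; 0,0,I,0; 0,I,0,0; -I,0,0,0],
    !![0,0,1,0; 0,0,0,-1; -1,0,0,0; 0,1,0,0]]

/-- γ⁵ = i·γ⁰γ¹γ²γ³. -/
def γ5 : Matrix (Fin 4) (Fin 4) ℂ := I • (γm 0 * γm 1 * γm 2 * γm 3)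

/-- σ^{μν} = (i/2)[γ^μ, γ^ν]. -/
def σm (μ ν : Fin 4) : Matrix (Fin 4) (Fin 4) ℂ := (I / 2) • (γm μ * γm ν - γm ν * γm μ)

/-- The metric signs ε 0 = 1, ε 1 = ε 2 = ε 3 = −1 used to raise/lower indices. -/
def εs : Fin 4 → ℤ := ![1, -1, -1, -1]

/-- The totally antisymmetric Levi-Civita symbol on four indices,
normalized by ε₄ 0 1 2 3 = 1. -/
def ε4 (κ l μ ν : Fin 4) : ℤ :=
  Matrix.det (Matrix.of fun p q : Fin 4 => if ![κ, l, μ, ν] p = q then (1 : ℤ) else 0)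

/-- The Grassmann algebra generated by the 8N fermion components:
the exterior algebra of the direct sum of two copies of (Fin 4 × Fin N) → ℂ. -/
abbrev GrassAlg (N : ℕ) :=
  ExteriorAlgebra ℂ (((Fin 4 × Fin N) → ℂ) × ((Fin 4 × Fin N) → ℂ))

/-- ψ (A, i): the image in the Grassmann algebra of the standard basis vector
of the first summand indexed by (A, i). -/
def ψv (N : ℕ) (A : Fin 4) (i : Fin N) : GrassAlg N :=
  ExteriorAlgebra.ι ℂ (Pi.single (A, i) 1, 0)

/-- ψ̄ (A, i): the image in the Grassmann algebra of the standard basis vector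
of the second summand indexed by (A, i). -/
def ψbar (N : ℕ) (A : Fin 4) (i : Fin N) : GrassAlg N :=
  ExteriorAlgebra.ι ℂ (0, Pi.single (A, i) 1)

/-- The fermion bilinear B Γ i j = ∑_{A,B} Γ A B · ψ̄ (A,i) ψ (B,j). -/
def Bgr (N : ℕ) (Γ : Matrix (Fin 4) (Fin 4) ℂ) (i j : Fin N) : GrassAlg N :=
  ∑ A : Fin 4, ∑ B : Fin 4, Γ A B • (ψbar N A i * ψv N B j)

/-- ⟪Γ, X⟫ = ∑_{i,j} X i j · B Γ i j, the bilinear with Dirac structure Γ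
and color structure X. -/
def pairing (N : ℕ) (Γ : Matrix (Fin 4) (Fin 4) ℂ)
    (X : Matrix (Fin N) (Fin N) ℂ) : GrassAlg N :=
  ∑ i : Fin N, ∑ j : Fin N, X i j • Bgr N Γ i j

/-- ⟪Γ⟫ = ⟪Γ, 1⟫, the color-singlet bilinear. -/
def sing (N : ℕ) (Γ : Matrix (Fin 4) (Fin 4) ℂ) : GrassAlg N := pairing N Γ 1

/-!
Summing over the first color index turns the left side into `⟪1⟫` times the color-exchanged
quartic `∑ i j, B 1 i j * B 1 j i`. Moving `ψ (B, j)` past `ψ̄ (C, j) ψ (D, i)` is an odd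
permutation of anticommuting generators, so every product of singlets `⟪Γ⟫ * ⟪Δ⟫` is minus a
color-exchanged quartic with crossed Dirac indices `Γ A D * Δ C B`, and these quartics depend
linearly on their coefficient tensor. The identity thus reduces to the Fierz completeness relation
`δ_AB δ_CD = ¼ ∑_Γ Γ_AD (Γ⁻¹)_CB` over the sixteen Dirac structures (each squares to `±1`), a
finite identity which is checked over the Gaussian integers.
-/

open GaussianInt

/-- The matrices `γm` over `ℤ[i]`, where equality is decidable, so that `decide` can verify the
completeness relation. -/
def γGauss : Fin 4 → Matrix (Fin 4) (Fin 4) GaussianInt :=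
  ![!![1,0,0,0; 0,1,0,0; 0,0,-1,0; 0,0,0,-1],
    !![0,0,0,1; 0,0,1,0; 0,-1,0,0; -1,0,0,0],
    !![0,0,0,-⟨0, 1⟩; 0,0,⟨0, 1⟩,0; 0,⟨0, 1⟩,0,0; -⟨0, 1⟩,0,0,0],
    !![0,0,1,0; 0,0,0,-1; -1,0,0,0; 0,1,0,0]]

theorem map_γGauss (μ : Fin 4) : (γGauss μ).map (↑) = γm μ := by
  ext A B
  fin_cases μ <;> fin_cases A <;> fin_cases B <;> simp [γGauss, γm, toComplex_def]

-- `s μ ν = 2 • σm μ ν`, and the relation is multiplied by `32` to clear denominators.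
theorem fierz_completeness_gauss (A B C D : Fin 4) :
    let ι : GaussianInt := ⟨0, 1⟩
    let g5 := ι • (γGauss 0 * γGauss 1 * γGauss 2 * γGauss 3)
    let s (μ ν : Fin 4) := ι • (γGauss μ * γGauss ν - γGauss ν * γGauss μ)
    32 * ((1 : Matrix (Fin 4) (Fin 4) GaussianInt) A B *
        (1 : Matrix (Fin 4) (Fin 4) GaussianInt) C D) =
      8 * ((1 : Matrix (Fin 4) (Fin 4) GaussianInt) A D *
          (1 : Matrix (Fin 4) (Fin 4) GaussianInt) C B
        + g5 A D * g5 C B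
        - ∑ μ, (εs μ : GaussianInt) * ((g5 * γGauss μ) A D * (g5 * γGauss μ) C B)
        + ∑ μ, (εs μ : GaussianInt) * (γGauss μ A D * γGauss μ C B))
        + ∑ μ, ∑ ν, (εs μ : GaussianInt) * εs ν * (s μ ν A D * s μ ν C B) := by
  revert A B C D
  decide

def fierzKernel (Γ Δ : Matrix (Fin 4) (Fin 4) ℂ) (A B C D : Fin 4) : ℂ := Γ A D * Δ C B

theorem fierz_completeness :
    (fun A B C D => (1 : Matrix (Fin 4) (Fin 4) ℂ) A B * (1 : Matrix (Fin 4) (Fin 4) ℂ) C D) =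
      (1 / 4 : ℂ) • (fierzKernel 1 1 + fierzKernel γ5 γ5
        - ∑ μ, (εs μ : ℂ) • fierzKernel (γ5 * γm μ) (γ5 * γm μ)
        + ∑ μ, (εs μ : ℂ) • fierzKernel (γm μ) (γm μ)
        + (1 / 2 : ℂ) • ∑ μ, ∑ ν, ((εs μ : ℂ) * εs ν) • fierzKernel (σm μ ν) (σm μ ν)) := by
  funext A B C D
  have h := congrArg toComplex (fierz_completeness_gauss A B C D)
  have hγ (μ A D : Fin 4) : toComplex (γGauss μ A D) = γm μ A D := by
    rw [← map_γGauss]; rfl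
  simp only [Matrix.one_apply, Matrix.smul_mul, Matrix.smul_apply, smul_eq_mul,
    Matrix.sub_apply, apply_ite toComplex, map_add, map_sub, map_mul, map_intCast,
    map_ofNat, map_one, map_zero, RingHom.map_matrix_mul, Matrix.map_mul, map_γGauss, hγ,
    toComplex_def', Int.cast_zero, Int.cast_one, zero_add, one_mul, Fin.sum_univ_four] at h
  simp only [fierzKernel, γ5, σm, Matrix.one_apply, Matrix.smul_mul, Matrix.smul_apply, smul_eq_mul,
    Matrix.sub_apply, Fin.sum_univ_four, Pi.add_apply, Pi.sub_apply, Pi.smul_apply]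
  linear_combination h / 32

namespace ExteriorAlgebra

variable {R M : Type*} [CommRing R] [AddCommGroup M] [Module R M]

theorem ι_mul_ι_comm (x y : M) : ι R x * ι R y = -(ι R y * ι R x) :=
  eq_neg_of_add_eq_zero_left (ι_add_mul_swap x y)

theorem ι_mul_ι_mul_ι_mul_ι_swap (a b c d : M) :
    ι R a * ι R b * ι R c * ι R d = -(ι R a * ι R d * ι R c * ι R b) := by
  have reverse : ι R b * ι R c * ι R d = -(ι R d * ι R c * ι R b) := by
    rw [ι_mul_ι_comm b c, neg_mul, mul_assoc, ι_mul_ι_comm b d, mul_neg, neg_neg, ← mul_assoc,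
      ι_mul_ι_comm c d, neg_mul]
  simp only [mul_assoc] at reverse ⊢
  rw [reverse, mul_neg]

end ExteriorAlgebra

section Grassmann

variable (N : ℕ)

def exchangeQuartic : (Fin 4 → Fin 4 → Fin 4 → Fin 4 → ℂ) →ₗ[ℂ] GrassAlg N where
  toFun K := ∑ i : Fin N, ∑ j : Fin N, ∑ A, ∑ B, ∑ C, ∑ D,
    K A B C D • (ψbar N A i * ψv N B j * ψbar N C j * ψv N D i)
  map_add' K L := by simp only [Pi.add_apply, add_smul, Finset.sum_add_distrib]
  map_smul' c K := by
    simp only [Pi.smul_apply, smul_eq_mul, mul_smul, Finset.smul_sum, RingHom.id_apply]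

theorem Bgr_mul_Bgr (Γ Δ : Matrix (Fin 4) (Fin 4) ℂ) (i j k l : Fin N) :
    Bgr N Γ i j * Bgr N Δ k l = ∑ A, ∑ B, ∑ C, ∑ D,
      (Γ A B * Δ C D) • (ψbar N A i * ψv N B j * ψbar N C k * ψv N D l) := by
  simp only [Bgr, Finset.sum_mul]
  simp only [Finset.mul_sum, smul_mul_smul_comm, ← mul_assoc]

theorem sum_Bgr_mul_Bgr_eq_exchangeQuartic (Γ Δ : Matrix (Fin 4) (Fin 4) ℂ) :
    ∑ i, ∑ j, Bgr N Γ i j * Bgr N Δ j i =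
      exchangeQuartic N (fun A B C D => Γ A B * Δ C D) := by
  simp only [Bgr_mul_Bgr]
  rfl

theorem sing_eq_sum (Γ : Matrix (Fin 4) (Fin 4) ℂ) : sing N Γ = ∑ i, Bgr N Γ i i := by
  simp [sing, pairing, Matrix.one_apply, ite_smul]

theorem sing_mul_sing_eq_neg_exchangeQuartic (Γ Δ : Matrix (Fin 4) (Fin 4) ℂ) :
    sing N Γ * sing N Δ = -exchangeQuartic N (fierzKernel Γ Δ) := by
  have rename (f : Fin 4 → Fin 4 → Fin 4 → GrassAlg N) :
      ∑ B, ∑ C, ∑ D, f B C D = ∑ D, ∑ C, ∑ B, f B C D := by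
    rw [Finset.sum_comm, Finset.sum_congr rfl fun _ _ => Finset.sum_comm, Finset.sum_comm]
  simp only [sing_eq_sum, Finset.sum_mul_sum, Bgr_mul_Bgr, exchangeQuartic, LinearMap.coe_mk,
    AddHom.coe_mk, fierzKernel, ← Finset.sum_neg_distrib]
  refine Finset.sum_congr rfl fun i _ => Finset.sum_congr rfl fun j _ =>
    Finset.sum_congr rfl fun A _ => (rename _).trans (Finset.sum_congr rfl fun D _ =>
      Finset.sum_congr rfl fun C _ => Finset.sum_congr rfl fun B _ => ?_)
  rw [← smul_neg]
  exact congrArg _ (ExteriorAlgebra.ι_mul_ι_mul_ι_mul_ι_swap _ _ _ _)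

theorem sum_Bgr_mul_Bgr_mul_Bgr_eq_sing_mul (Γ Δ Λ : Matrix (Fin 4) (Fin 4) ℂ) :
    ∑ i₁, ∑ i₂, ∑ i₃, Bgr N Γ i₁ i₁ * Bgr N Δ i₂ i₃ * Bgr N Λ i₃ i₂ =
      sing N Γ * ∑ i, ∑ j, Bgr N Δ i j * Bgr N Λ j i := by
  simp only [sing_eq_sum, Finset.sum_mul]
  simp only [Finset.mul_sum, mul_assoc]

end Grassmann

theorem fierz4_exchange (N : ℕ) :
    ∑ i : Fin N, ∑ j : Fin N, Bgr N 1 i j * Bgr N 1 j i =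
      -(1 / 4 : ℂ) • (sing N 1 * sing N 1 + sing N γ5 * sing N γ5
        - ∑ μ, (εs μ : ℂ) • (sing N (γ5 * γm μ) * sing N (γ5 * γm μ))
        + ∑ μ, (εs μ : ℂ) • (sing N (γm μ) * sing N (γm μ))
        + (1 / 2 : ℂ) • ∑ μ, ∑ ν, ((εs μ : ℂ) * εs ν) • (sing N (σm μ ν) * sing N (σm μ ν))) := by
  rw [sum_Bgr_mul_Bgr_eq_exchangeQuartic, fierz_completeness]
  simp only [map_add, map_sub, map_smul, map_sum, sing_mul_sing_eq_neg_exchangeQuartic, smul_neg,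
    Finset.sum_neg_distrib]
  module

theorem fierz6_exchange_general (N : ℕ) :
    ∑ i₁ : Fin N, ∑ i₂ : Fin N, ∑ i₃ : Fin N,
        Bgr N 1 i₁ i₁ * Bgr N 1 i₂ i₃ * Bgr N 1 i₃ i₂ =
      (-(1 / 4) : ℂ) • (sing N 1 * sing N 1 * sing N 1)
        - (1 / 4 : ℂ) • (sing N 1 * sing N γ5 * sing N γ5)
        + (1 / 4 : ℂ) • ∑ μ, (εs μ : ℂ) •
            (sing N 1 * sing N (γ5 * γm μ) * sing N (γ5 * γm μ))
        - (1 / 4 : ℂ) • ∑ μ, (εs μ : ℂ) • (sing N 1 * sing N (γm μ) * sing N (γm μ))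
        - (1 / 8 : ℂ) • ∑ μ, ∑ ν, ((εs μ : ℂ) * (εs ν : ℂ)) •
            (sing N 1 * sing N (σm μ ν) * sing N (σm μ ν)) := by
  rw [sum_Bgr_mul_Bgr_mul_Bgr_eq_sing_mul, fierz4_exchange]
  simp only [mul_smul_comm, mul_add, mul_sub, Finset.mul_sum, ← mul_assoc]
  module

/-- **Exchange-type sixth-order Fierz identity.** -/
theorem fierz6_exchange (N : ℕ) (hN : 2 ≤ N)
    (T : Fin (N ^ 2 - 1) → Matrix (Fin N) (Fin N) ℂ)
    (htr : ∀ a, (T a).trace = 0)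
    (hherm : ∀ a, (T a)ᴴ = T a)
    (horth : ∀ a b, (T a * T b).trace = if a = b then (1 / 2 : ℂ) else 0) :
    ∑ i₁ : Fin N, ∑ i₂ : Fin N, ∑ i₃ : Fin N,
        Bgr N 1 i₁ i₁ * Bgr N 1 i₂ i₃ * Bgr N 1 i₃ i₂ =
      (-(1 / 4) : ℂ) • (sing N 1 * sing N 1 * sing N 1)
        - (1 / 4 : ℂ) • (sing N 1 * sing N γ5 * sing N γ5)
        + (1 / 4 : ℂ) • ∑ μ, (εs μ : ℂ) •
            (sing N 1 * sing N (γ5 * γm μ) * sing N (γ5 * γm μ))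
        - (1 / 4 : ℂ) • ∑ μ, (εs μ : ℂ) • (sing N 1 * sing N (γm μ) * sing N (γm μ))
        - (1 / 8 : ℂ) • ∑ μ, ∑ ν, ((εs μ : ℂ) * (εs ν : ℂ)) •
            (sing N 1 * sing N (σm μ ν) * sing N (σm μ ν)) :=
  fierz6_exchange_general N
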